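/- arXiv:2603.09477 — 4 statements merged into one kernel-verified Lean document; each statement's English description precedes it below -/
import Mathlib

section
/- Let V and E be finite-dimensional complex vector spaces, let d = dim V ≥ 2, let v : Fin d → V be a basis of V, and let Υ : ⋀²V →ₗ[ℂ] E be a linear map. Then the following are equivalent: (a) there exists a family A : Fin d → Matrix (Fin 2) (Fin 2) ℂ such that ∑_{i,j} Υ(vᵢ ∧ vⱼ) ⊗ (Aᵢ·Aⱼ − Aⱼ·Aᵢ) = 0 in E ⊗[ℂ] Matrix (Fin 2) (Fin 2) ℂ, while Aᵢ·Aⱼ ≠ Aⱼ·Aᵢ for some indices i, j; (b) there exist u, w ∈ V with u ∧ w ≠ 0 in ⋀²V and Υ(u ∧ w) = 0. -/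
open scoped TensorProduct

/-- The wedge product `u ∧ w` of two vectors, as an element of the second exterior
power `⋀[ℂ]^2 V` (a submodule of the exterior algebra). -/
noncomputable def wedge {V : Type*} [AddCommGroup V] [Module ℂ V] (u w : V) :
    ⋀[ℂ]^2 V :=
  ⟨ExteriorAlgebra.ιMulti ℂ 2 ![u, w],
    ExteriorAlgebra.ιMulti_range ℂ 2 ⟨![u, w], rfl⟩⟩

/-!
Both directions rest on the identity
`∑ᵢⱼ (aᵢbⱼ - aⱼbᵢ) • vᵢ ∧ vⱼ = 2 • (∑ᵢ aᵢvᵢ) ∧ (∑ᵢ bᵢvᵢ)`.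

Every entry of a `2 × 2` commutator `[X, Y]` is a minor `p X * q Y - p Y * q X` of two
functions `p, q` of the matrices. Contracting the equation of (a) with an entry that is nonzero
in some `[Aᵢ, Aⱼ]` therefore gives `Υ (u ∧ w) = 0` for `u = ∑ p (Aᵢ) vᵢ` and
`w = ∑ q (Aᵢ) vᵢ`, and `u ∧ w ≠ 0` because one of its coordinate minors is that entry.

Conversely, if `Υ (u ∧ w) = 0`, the matrices `Aᵢ = [[0, uᵢ], [wᵢ, 0]]` have commutators
`(uᵢwⱼ - uⱼwᵢ) • diag(1, -1)`, not all zero since `u ∧ w ≠ 0`, and (a) becomes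
`2 • Υ (u ∧ w) ⊗ diag(1, -1) = 0`.
-/

namespace Matrix

lemma exists_commutator_apply_eq_minor {R : Type*} [CommRing R] (k l : Fin 2) :
    ∃ p q : Matrix (Fin 2) (Fin 2) R → R,
      ∀ X Y, (X * Y - Y * X) k l = p X * q Y - p Y * q X := by
  fin_cases k <;> fin_cases l
  · exact ⟨(· 0 1), (· 1 0), fun X Y ↦ by simp [mul_apply]; ring⟩
  · exact ⟨fun M ↦ M 0 0 - M 1 1, (· 0 1), fun X Y ↦ by simp [mul_apply]; ring⟩
  · exact ⟨(· 1 0), fun M ↦ M 0 0 - M 1 1, fun X Y ↦ by simp [mul_apply]; ring⟩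
  · exact ⟨(· 1 0), (· 0 1), fun X Y ↦ by simp [mul_apply]; ring⟩

lemma antidiag_commutator {R : Type*} [CommRing R] (a b c d : R) :
    !![0, a; b, 0] * !![0, c; d, 0] - !![0, c; d, 0] * !![0, a; b, 0]
      = (a * d - c * b) • !![1, 0; 0, -1] := by
  ext i j
  fin_cases i <;> fin_cases j <;> simp; ring

end Matrix

section Wedge

open ExteriorAlgebra

variable {V : Type*} [AddCommGroup V] [Module ℂ V]

lemma wedge_eq_ιMulti (u w : V) : wedge u w = exteriorPower.ιMulti ℂ 2 ![u, w] := rfl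

lemma coe_wedge (u w : V) : (wedge u w : ExteriorAlgebra ℂ V) = ι ℂ u * ι ℂ w := by
  simp [wedge, ιMulti_apply]

lemma wedge_swap (u w : V) : wedge w u = -wedge u w :=
  Subtype.ext <| by simp [coe_wedge, eq_neg_iff_add_eq_zero]

noncomputable def wedgeₗ : V →ₗ[ℂ] V →ₗ[ℂ] ⋀[ℂ]^2 V :=
  LinearMap.mk₂ ℂ wedge
    (fun _ _ _ ↦ Subtype.ext <| by simp [coe_wedge, add_mul])
    (fun _ _ _ ↦ Subtype.ext <| by simp [coe_wedge])
    (fun _ _ _ ↦ Subtype.ext <| by simp [coe_wedge, mul_add])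
    (fun _ _ _ ↦ Subtype.ext <| by simp [coe_wedge])

@[simp] lemma wedgeₗ_apply (u w : V) : wedgeₗ u w = wedge u w := rfl

lemma wedge_sum_smul_sum {ι : Type*} [Fintype ι] (x : ι → V) (a b : ι → ℂ) :
    wedge (∑ i, a i • x i) (∑ i, b i • x i) = ∑ i, ∑ j, (a i * b j) • wedge (x i) (x j) := by
  simp only [← wedgeₗ_apply, map_sum, map_smul, LinearMap.sum_apply, LinearMap.smul_apply,
    Finset.smul_sum, smul_smul]
  rw [Finset.sum_comm]
  simp only [mul_comm (b _)]

lemma sum_sum_minor_smul_wedge {ι : Type*} [Fintype ι] (x : ι → V) (a b : ι → ℂ) :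
    ∑ i, ∑ j, (a i * b j - a j * b i) • wedge (x i) (x j)
      = (2 : ℂ) • wedge (∑ i, a i • x i) (∑ i, b i • x i) := by
  have hswap : ∑ i, ∑ j, (a j * b i) • wedge (x i) (x j)
      = -∑ i, ∑ j, (a i * b j) • wedge (x i) (x j) := by
    rw [Finset.sum_comm, ← Finset.sum_neg_distrib]
    refine Finset.sum_congr rfl fun i _ ↦ ?_
    rw [← Finset.sum_neg_distrib]
    refine Finset.sum_congr rfl fun j _ ↦ ?_
    rw [wedge_swap, smul_neg]
  calc ∑ i, ∑ j, (a i * b j - a j * b i) • wedge (x i) (x j)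
      = ∑ i, ∑ j, (a i * b j) • wedge (x i) (x j)
          - ∑ i, ∑ j, (a j * b i) • wedge (x i) (x j) := by
        simp only [← Finset.sum_sub_distrib]
        -- `rw [sub_smul]` fails: the scalar action on the submodule `⋀[ℂ]^2 V` only matches
        -- the one of `sub_smul` after unfolding instances
        exact Finset.sum_congr rfl fun i _ ↦ Finset.sum_congr rfl fun j _ ↦
          sub_smul (a i * b j) (a j * b i) (wedge (x i) (x j))
    _ = (2 : ℂ) • wedge (∑ i, a i • x i) (∑ i, b i • x i) := by
        rw [hswap, sub_neg_eq_add, two_smul, wedge_sum_smul_sum]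

lemma wedge_eq_zero_iff {ι : Type*} [Fintype ι] (v : Module.Basis ι ℂ V) (u w : V) :
    wedge u w = 0 ↔ ∀ i j, v.repr u i * v.repr w j = v.repr u j * v.repr w i := by
  constructor
  · intro h i j
    have := congrArg (exteriorPower.pairingDual ℂ V 2
      (exteriorPower.ιMulti ℂ 2 ![v.coord i, v.coord j])) h
    simpa [wedge_eq_ιMulti, Matrix.det_fin_two, sub_eq_zero] using this
  · intro h
    have h2 := sum_sum_minor_smul_wedge v (v.repr u) (v.repr w)
    simp only [h, sub_self, zero_smul, Finset.sum_const_zero, v.sum_repr] at h2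
    exact (smul_eq_zero.mp h2.symm).resolve_left two_ne_zero

end Wedge

theorem stmt0_general {V E : Type*} [AddCommGroup V] [Module ℂ V]
    [AddCommGroup E] [Module ℂ E]
    (d : ℕ)
    (v : Module.Basis (Fin d) ℂ V)
    (Υ : (⋀[ℂ]^2 V) →ₗ[ℂ] E) :
    (∃ A : Fin d → Matrix (Fin 2) (Fin 2) ℂ,
        (∑ i : Fin d, ∑ j : Fin d,
            (Υ (wedge (v i) (v j))) ⊗ₜ[ℂ] (A i * A j - A j * A i)
          = (0 : E ⊗[ℂ] Matrix (Fin 2) (Fin 2) ℂ)) ∧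
        ∃ i j : Fin d, A i * A j ≠ A j * A i)
      ↔
    (∃ u w : V, wedge u w ≠ 0 ∧ Υ (wedge u w) = 0) := by
  have hΥ (a b : Fin d → ℂ) : ∑ i, ∑ j, (a i * b j - a j * b i) • Υ (wedge (v i) (v j))
      = (2 : ℂ) • Υ (wedge (∑ i, a i • v i) (∑ i, b i • v i)) := by
    rw [← map_smul, ← sum_sum_minor_smul_wedge]
    simp only [map_sum, map_smul]
  constructor
  · rintro ⟨A, hsum, i₀, j₀, hne⟩
    obtain ⟨k, l, hkl⟩ : ∃ k l, (A i₀ * A j₀ - A j₀ * A i₀) k l ≠ 0 := by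
      by_contra! h
      exact hne (sub_eq_zero.mp (Matrix.ext h))
    obtain ⟨p, q, hpq⟩ := Matrix.exists_commutator_apply_eq_minor (R := ℂ) k l
    refine ⟨∑ i, p (A i) • v i, ∑ i, q (A i) • v i, ?_, ?_⟩
    · rw [Ne, wedge_eq_zero_iff v]
      push Not
      exact ⟨i₀, j₀, by simpa only [v.repr_sum_self, hpq, sub_ne_zero] using hkl⟩
    · have hkl_sum := congrArg ((TensorProduct.rid ℂ E).toLinearMap ∘ₗ
        (Matrix.entryLinearMap ℂ ℂ k l).lTensor E) hsum
      simp only [map_sum, LinearMap.comp_apply, LinearMap.lTensor_tmul, LinearEquiv.coe_coe,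
        TensorProduct.rid_tmul, Matrix.entryLinearMap_apply, hpq, hΥ, map_zero] at hkl_sum
      exact (smul_eq_zero.mp hkl_sum).resolve_left two_ne_zero
  · rintro ⟨u, w, hne, hker⟩
    obtain ⟨i, j, hij⟩ : ∃ i j, v.repr u i * v.repr w j ≠ v.repr u j * v.repr w i := by
      simpa using (wedge_eq_zero_iff v u w).not.mp hne
    refine ⟨fun i ↦ !![0, v.repr u i; v.repr w i, 0], ?_, i, j, ?_⟩
    · beta_reduce
      simp_rw [Matrix.antidiag_commutator, TensorProduct.tmul_smul, TensorProduct.smul_tmul',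
        ← TensorProduct.sum_tmul, hΥ, v.sum_repr, hker, smul_zero, TensorProduct.zero_tmul]
    · rw [Ne, ← sub_eq_zero, Matrix.antidiag_commutator, smul_eq_zero]
      refine not_or.mpr ⟨sub_ne_zero.mpr hij, fun h ↦ ?_⟩
      simpa using congrFun (congrFun h 0) 0

/-- Semi-rigidity criterion in the local model: there is a
non-commuting solution of `μ(α) = 0` in `V ⊗ 𝔤𝔩₂` if and only if `ker Υ`
contains a nonzero decomposable element. -/
theorem stmt0 {V E : Type*} [AddCommGroup V] [Module ℂ V] [FiniteDimensional ℂ V]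
    [AddCommGroup E] [Module ℂ E] [FiniteDimensional ℂ E]
    (d : ℕ) (hd : 2 ≤ d) (hdim : Module.finrank ℂ V = d)
    (v : Module.Basis (Fin d) ℂ V)
    (Υ : (⋀[ℂ]^2 V) →ₗ[ℂ] E) :
    (∃ A : Fin d → Matrix (Fin 2) (Fin 2) ℂ,
        (∑ i : Fin d, ∑ j : Fin d,
            (Υ (wedge (v i) (v j))) ⊗ₜ[ℂ] (A i * A j - A j * A i)
          = (0 : E ⊗[ℂ] Matrix (Fin 2) (Fin 2) ℂ)) ∧
        ∃ i j : Fin d, A i * A j ≠ A j * A i)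
      ↔
    (∃ u w : V, wedge u w ≠ 0 ∧ Υ (wedge u w) = 0) :=
  stmt0_general d v Υ
end

section
/- Let V and E be finite-dimensional complex vector spaces, let Υ : ⋀²V →ₗ[ℂ] E be a linear map, and let u, w ∈ V satisfy u ∧ w ≠ 0 in ⋀²V and Υ(u ∧ w) = 0. Then for every integer n ≥ 2 there exist matrices X, Y ∈ Matrix (Fin n) (Fin n) ℂ such that: (u ∧ w) ⊗ (X·Y − Y·X) ≠ 0 in ⋀²V ⊗[ℂ] Matrix (Fin n) (Fin n) ℂ; Υ(u ∧ w) ⊗ (X·Y − Y·X) = 0 in E ⊗[ℂ] Matrix (Fin n) (Fin n) ℂ; and every matrix B with B·X = X·B and B·Y = Y·B is a scalar multiple of the identity. -/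
set_option synthInstance.maxHeartbeats 400000
set_option maxHeartbeats 1000000

open scoped TensorProduct

/-!
Take `X = diag(0, 1, …, n-1)` and `Y` the all-ones matrix. Then `[X, Y]` has entries
`i - j`, so it is nonzero once `n ≥ 2`, and over a field a pure tensor of nonzero vectors is
nonzero. A matrix commuting with `X` is diagonal because the eigenvalues of `X` are distinct,
and a diagonal matrix `diag(b)` commutes with the all-ones matrix only if `b_i = b_j` for all
`i, j`.
-/

theorem TensorProduct.tmul_ne_zero {R M N : Type*} [CommRing R] [IsDomain R]
    [AddCommGroup M] [Module R M] [Module.IsTorsionFree R M]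
    [AddCommGroup N] [Module R N] [Module.Flat R N]
    {m : M} {n : N} (hm : m ≠ 0) (hn : n ≠ 0) : m ⊗ₜ[R] n ≠ 0 := by
  have hinj : Function.Injective ((LinearMap.toSpanSingleton R M m).rTensor N) :=
    Module.Flat.rTensor_preserves_injective_linearMap _ (smul_left_injective R hm)
  have h1n : (1 : R) ⊗ₜ[R] n ≠ 0 := fun h =>
    hn (by simpa using congrArg (TensorProduct.lid R N) h)
  simpa using (map_ne_zero_iff _ hinj).mpr h1n

namespace Matrix

variable {ι R : Type*} [Fintype ι]

theorem diagonal_mul_ones_sub_ones_mul_diagonal_apply [DecidableEq ι] [Ring R]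
    (d : ι → R) (i j : ι) :
    (diagonal d * of (fun _ _ => 1) - of (fun _ _ => 1) * diagonal d : Matrix ι ι R) i j =
      d i - d j := by
  simp [diagonal_mul, mul_diagonal]

theorem diagonal_mul_ones_sub_ones_mul_diagonal_ne_zero [DecidableEq ι] [Nontrivial ι]
    [Ring R] {d : ι → R} (hd : Function.Injective d) :
    (diagonal d * of (fun _ _ => 1) - of (fun _ _ => 1) * diagonal d : Matrix ι ι R) ≠ 0 := by
  obtain ⟨i, j, hij⟩ := exists_pair_ne ι
  intro h
  have := diagonal_mul_ones_sub_ones_mul_diagonal_apply d i j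
  rw [h, zero_apply, eq_comm, sub_eq_zero] at this
  exact hij (hd this)

theorem apply_eq_zero_of_commute_diagonal [DecidableEq ι] [CommRing R] [NoZeroDivisors R]
    {d : ι → R} (hd : Function.Injective d) {B : Matrix ι ι R} (h : Commute B (diagonal d))
    {i j : ι} (hij : i ≠ j) : B i j = 0 := by
  have hBij : B i j * (d j - d i) = 0 := by
    have := congrFun₂ h.eq i j
    simp only [mul_diagonal, diagonal_mul] at this
    linear_combination this
  exact (mul_eq_zero.mp hBij).resolve_right (sub_ne_zero.mpr (hd.ne hij.symm))

theorem apply_self_eq_of_commute_ones [NonAssocSemiring R] {B : Matrix ι ι R}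
    (hB : ∀ i j, i ≠ j → B i j = 0) (h : Commute B (of fun _ _ => 1)) (i j : ι) :
    B i i = B j j := by
  have := congrFun₂ h.eq i j
  simpa [mul_apply, Finset.sum_eq_single i (fun k _ hk => hB i k hk.symm),
    Finset.sum_eq_single j (fun k _ hk => hB k j hk)] using this

theorem exists_eq_smul_one_of_commute_diagonal_of_commute_ones [DecidableEq ι] [CommRing R]
    [NoZeroDivisors R] {d : ι → R} (hd : Function.Injective d) {B : Matrix ι ι R}
    (hX : Commute B (diagonal d)) (hY : Commute B (of fun _ _ => 1)) :
    ∃ c : R, B = c • 1 := by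
  have hB : ∀ i j, i ≠ j → B i j = 0 := fun _ _ => apply_eq_zero_of_commute_diagonal hd hX
  rcases isEmpty_or_nonempty ι with hι | ⟨⟨i₀⟩⟩
  · exact ⟨0, Subsingleton.elim _ _⟩
  refine ⟨B i₀ i₀, ext fun i j => ?_⟩
  rcases eq_or_ne i j with rfl | hij
  · simp [apply_self_eq_of_commute_ones hB hY i i₀]
  · simp [hB i j hij, hij]

end Matrix

theorem stmt2_general {V E : Type*} [AddCommGroup V] [Module ℂ V]
    [AddCommGroup E] [Module ℂ E]
    (Υ : (⋀[ℂ]^2 V) →ₗ[ℂ] E)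
    (u w : V) (hne : wedge u w ≠ 0) (hker : Υ (wedge u w) = 0)
    (n : ℕ) (hn : 2 ≤ n) :
    ∃ X Y : Matrix (Fin n) (Fin n) ℂ,
      (wedge u w) ⊗ₜ[ℂ] (X * Y - Y * X)
          ≠ (0 : (⋀[ℂ]^2 V) ⊗[ℂ] Matrix (Fin n) (Fin n) ℂ) ∧
      (Υ (wedge u w)) ⊗ₜ[ℂ] (X * Y - Y * X)
          = (0 : E ⊗[ℂ] Matrix (Fin n) (Fin n) ℂ) ∧
      ∀ B : Matrix (Fin n) (Fin n) ℂ,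
        B * X = X * B → B * Y = Y * B → ∃ c : ℂ, B = c • (1 : Matrix (Fin n) (Fin n) ℂ) := by
  have : Nontrivial (Fin n) := Fin.nontrivial_iff_two_le.mpr hn
  have hd : Function.Injective fun i : Fin n => ((i : ℕ) : ℂ) :=
    fun i j h => Fin.ext (Nat.cast_injective h)
  refine ⟨Matrix.diagonal _, Matrix.of fun _ _ => 1,
    TensorProduct.tmul_ne_zero hne (Matrix.diagonal_mul_ones_sub_ones_mul_diagonal_ne_zero hd),
    by rw [hker, TensorProduct.zero_tmul], fun _ =>
    Matrix.exists_eq_smul_one_of_commute_diagonal_of_commute_ones hd⟩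

/-- A nonzero decomposable element `u ∧ w` of `ker Υ` produces, for
every `n ≥ 2`, a non-commuting solution of `μ(α) = 0` in `V ⊗ 𝔤𝔩ₙ` with scalar
stabiliser. -/
theorem stmt2 {V E : Type*} [AddCommGroup V] [Module ℂ V] [FiniteDimensional ℂ V]
    [AddCommGroup E] [Module ℂ E] [FiniteDimensional ℂ E]
    (Υ : (⋀[ℂ]^2 V) →ₗ[ℂ] E)
    (u w : V) (hne : wedge u w ≠ 0) (hker : Υ (wedge u w) = 0)
    (n : ℕ) (hn : 2 ≤ n) :
    ∃ X Y : Matrix (Fin n) (Fin n) ℂ,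
      (wedge u w) ⊗ₜ[ℂ] (X * Y - Y * X)
          ≠ (0 : (⋀[ℂ]^2 V) ⊗[ℂ] Matrix (Fin n) (Fin n) ℂ) ∧
      (Υ (wedge u w)) ⊗ₜ[ℂ] (X * Y - Y * X)
          = (0 : E ⊗[ℂ] Matrix (Fin n) (Fin n) ℂ) ∧
      ∀ B : Matrix (Fin n) (Fin n) ℂ,
        B * X = X * B → B * Y = Y * B → ∃ c : ℂ, B = c • (1 : Matrix (Fin n) (Fin n) ℂ) :=
  stmt2_general Υ u w hne hker n hn
end

section
/- Let n, d ≥ 1, let μ, ν : Fin d → Fin n → ℂ, and let g ∈ Matrix (Fin n) (Fin n) ℂ be invertible with Matrix.diagonal (ν k) = g · Matrix.diagonal (μ k) · g⁻¹ for every k ∈ Fin d. Then there exists a permutation σ of Fin n such that ν k i = μ k (σ i) for all k ∈ Fin d and all i ∈ Fin n. -/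
/-!
Conjugating `diagonal (μ k)` to `diagonal (ν k)` means `diagonal (ν k) * g = g * diagonal (μ k)`,
so an entry `g i j` can be nonzero only when the joint eigenvalue tuples `ν · i` and `μ · j` agree.
Hence, for a tuple `a`, the number of `i` with `ν · i = a` is the trace of the block of
`g * g⁻¹ = 1` over the fibres above `a`, and exchanging the order of summation turns it into the
trace of the corresponding block of `g⁻¹ * g = 1`, which counts the `j` with `μ · j = a`.
Equal fibre sizes give the permutation.
-/

open Matrix Finset

theorem Matrix.eq_of_diagonal_mul_eq_mul_diagonal {m n R : Type*} [Fintype m] [Fintype n]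
    [DecidableEq m] [DecidableEq n] [CommSemiring R] [IsLeftCancelMulZero R]
    {a : m → R} {b : n → R} {P : Matrix m n R} (hP : diagonal a * P = P * diagonal b)
    {i : m} {j : n} (hij : P i j ≠ 0) : a i = b j := by
  have hentry := congrFun (congrFun hP i) j
  rw [diagonal_mul, mul_diagonal, mul_comm] at hentry
  exact mul_left_cancel₀ hij hentry

theorem Matrix.card_filter_eq_of_mul_eq_one {m n R α : Type*} [Fintype m] [Fintype n]
    [DecidableEq m] [DecidableEq n] [DecidableEq α] [CommSemiring R] [CharZero R]
    {P : Matrix m n R} {Q : Matrix n m R} (hPQ : P * Q = 1) (hQP : Q * P = 1)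
    {f : m → α} {f' : n → α} (hP : ∀ i j, P i j ≠ 0 → f i = f' j) (a : α) :
    #{i | f i = a} = #{j | f' j = a} := by
  suffices h : (#{i | f i = a} : R) = #{j | f' j = a} from mod_cast h
  calc (#{i | f i = a} : R)
      = ∑ i ∈ univ.filter (f · = a), (P * Q) i i := by simp [hPQ]
    _ = ∑ i ∈ univ.filter (f · = a), ∑ j ∈ univ.filter (f' · = a), P i j * Q j i := by
      refine sum_congr rfl fun i hi => (sum_filter_of_ne fun j _ hj => ?_).symm
      exact (hP i j (left_ne_zero_of_mul hj)).symm.trans (mem_filter.1 hi).2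
    _ = ∑ j ∈ univ.filter (f' · = a), ∑ i ∈ univ.filter (f · = a), Q j i * P i j := by
      rw [sum_comm]; simp_rw [mul_comm]
    _ = ∑ j ∈ univ.filter (f' · = a), (Q * P) j j := by
      refine sum_congr rfl fun j hj => sum_filter_of_ne fun i _ hi => ?_
      exact (hP i j (right_ne_zero_of_mul hi)).trans (mem_filter.1 hj).2
    _ = #{j | f' j = a} := by simp [hQP]

theorem Function.exists_perm_eq_comp_of_card_filter_eq {ι α : Type*} [Fintype ι]
    [DecidableEq α] {f f' : ι → α} (h : ∀ a, #{i | f i = a} = #{i | f' i = a}) :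
    ∃ σ : Equiv.Perm ι, ∀ i, f i = f' (σ i) := by
  have e : ∀ a, {i // f i = a} ≃ {i // f' i = a} := fun a =>
    Fintype.equivOfCardEq (by rw [Fintype.card_subtype, Fintype.card_subtype, h])
  exact ⟨Equiv.ofFiberEquiv e, fun i => (Equiv.ofFiberEquiv_map e i).symm⟩

theorem stmt13_general (n d : ℕ)
    (μ ν : Fin d → Fin n → ℂ)
    (g : Matrix (Fin n) (Fin n) ℂ) (hg : IsUnit g)
    (h : ∀ k : Fin d, Matrix.diagonal (ν k) = g * Matrix.diagonal (μ k) * g⁻¹) :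
    ∃ σ : Equiv.Perm (Fin n), ∀ (k : Fin d) (i : Fin n), ν k i = μ k (σ i) := by
  have hdet : IsUnit g.det := (isUnit_iff_isUnit_det g).1 hg
  have hcomm : ∀ k, diagonal (ν k) * g = g * diagonal (μ k) := fun k => by
    rw [h k, nonsing_inv_mul_cancel_right _ _ hdet]
  have hg_entry : ∀ i j, g i j ≠ 0 → (fun k => ν k i) = fun k => μ k j := fun i j hij =>
    funext fun k => eq_of_diagonal_mul_eq_mul_diagonal (hcomm k) hij
  obtain ⟨σ, hσ⟩ := Function.exists_perm_eq_comp_of_card_filter_eq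
    (card_filter_eq_of_mul_eq_one (mul_nonsing_inv g hdet) (nonsing_inv_mul g hdet) hg_entry)
  exact ⟨σ, fun k i => congrFun (hσ i) k⟩

/-- The unordered set of joint eigenvalue tuples of a simultaneously
diagonalisable commuting tuple is invariant under simultaneous conjugation: if
`diagonal (ν k) = g · diagonal (μ k) · g⁻¹` for all `k`, the columns of `ν` are a
permutation of those of `μ`. -/
theorem stmt13 (n d : ℕ) (hn : 1 ≤ n) (hd : 1 ≤ d)
    (μ ν : Fin d → Fin n → ℂ)
    (g : Matrix (Fin n) (Fin n) ℂ) (hg : IsUnit g)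
    (h : ∀ k : Fin d, Matrix.diagonal (ν k) = g * Matrix.diagonal (μ k) * g⁻¹) :
    ∃ σ : Equiv.Perm (Fin n), ∀ (k : Fin d) (i : Fin n), ν k i = μ k (σ i) :=
  stmt13_general n d μ ν g hg h
end

section
/- Let V and E be finite-dimensional complex vector spaces, let v : Fin d → V be a basis of V, and let Υ : ⋀²V →ₗ[ℂ] E be an injective linear map. Let n ≥ 1 and let A : Fin d → Matrix (Fin n) (Fin n) ℂ satisfy ∑_{i,j} Υ(vᵢ ∧ vⱼ) ⊗ (Aᵢ·Aⱼ − Aⱼ·Aᵢ) = 0 in E ⊗[ℂ] Matrix (Fin n) (Fin n) ℂ. Then the matrices Aᵢ pairwise commute: Aᵢ·Aⱼ = Aⱼ·Aᵢ for all i, j. -/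
open scoped TensorProduct

set_option synthInstance.maxHeartbeats 400000
set_option maxHeartbeats 1000000

/-!
Since `[Aᵢ, Aⱼ]` is antisymmetric in `(i, j)`, the hypothesis says
`(Υ ⊗ id) (∑_{i<j} 2 (vᵢ ∧ vⱼ) ⊗ [Aᵢ, Aⱼ]) = 0`. Over a field `Υ ⊗ id` is again injective, and the
coefficient of `v_k ∧ v_l` is extracted by the linear form `u ∧ w ↦ u_k w_l - u_l w_k` on `⋀²V`,
giving `2 [A_k, A_l] = 0`.
-/

namespace Module.Basis

section CommRing

variable {R M ι : Type*} [CommRing R] [AddCommGroup M] [Module R M]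

/-- The coefficient of `b k ∧ b l` in an element of `⋀²M`. -/
noncomputable def wedgeCoeff (b : Basis ι R M) (k l : ι) : ⋀[R]^2 M →ₗ[R] R :=
  ExteriorAlgebra.liftAlternating
      (Function.update 0 2 (Matrix.detRowAlternating.compLinearMap
        (LinearMap.pi ![b.coord k, b.coord l]))) ∘ₗ
    (⋀[R]^2 M).subtype

theorem wedgeCoeff_ιMulti (b : Basis ι R M) (k l : ι) (u w : M) :
    b.wedgeCoeff k l ⟨ExteriorAlgebra.ιMulti R 2 ![u, w],
      ExteriorAlgebra.ιMulti_range R 2 ⟨![u, w], rfl⟩⟩ =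
      b.coord k u * b.coord l w - b.coord l u * b.coord k w := by
  rw [wedgeCoeff, LinearMap.comp_apply, Submodule.subtype_apply,
    ExteriorAlgebra.liftAlternating_apply_ιMulti, Function.update_self,
    AlternatingMap.compLinearMap_apply]
  change Matrix.det (Matrix.of fun i => LinearMap.pi ![b.coord k, b.coord l] (![u, w] i)) = _
  simp [Matrix.det_fin_two]

end CommRing

variable {V N ι : Type*} [AddCommGroup V] [Module ℂ V] [AddCommGroup N] [Module ℂ N]

theorem wedgeCoeff_wedge [DecidableEq ι] (b : Basis ι ℂ V) (i j k l : ι) :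
    b.wedgeCoeff k l (wedge (b i) (b j)) =
      (if i = k ∧ j = l then 1 else 0) - (if i = l ∧ j = k then 1 else 0) := by
  rw [wedge, b.wedgeCoeff_ιMulti]
  simp only [coord_apply, repr_self_apply, ite_and]
  split_ifs <;> simp

theorem sub_eq_zero_of_sum_wedge_tmul_eq_zero [Fintype ι] (b : Basis ι ℂ V) (C : ι → ι → N)
    (h : ∑ i, ∑ j, wedge (b i) (b j) ⊗ₜ[ℂ] C i j = 0) (k l : ι) :
    C k l - C l k = 0 := by
  classical
  have := congrArg (TensorProduct.lid ℂ N ∘ (b.wedgeCoeff k l).rTensor N) h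
  simpa [b.wedgeCoeff_wedge, sub_smul, ite_smul, Finset.sum_sub_distrib, ite_and] using this

end Module.Basis

theorem stmt14_general {V E : Type*} [AddCommGroup V] [Module ℂ V]
    [AddCommGroup E] [Module ℂ E]
    (d : ℕ) (v : Module.Basis (Fin d) ℂ V)
    (Υ : (⋀[ℂ]^2 V) →ₗ[ℂ] E) (hΥ : Function.Injective Υ)
    (n : ℕ)
    (A : Fin d → Matrix (Fin n) (Fin n) ℂ)
    (hA : (∑ i : Fin d, ∑ j : Fin d,
        (Υ (wedge (v i) (v j))) ⊗ₜ[ℂ] (A i * A j - A j * A i))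
      = (0 : E ⊗[ℂ] Matrix (Fin n) (Fin n) ℂ)) :
    ∀ i j : Fin d, A i * A j = A j * A i := by
  intro k l
  have hwedge : ∑ i, ∑ j, wedge (v i) (v j) ⊗ₜ[ℂ] (A i * A j - A j * A i) = 0 := by
    apply Module.Flat.rTensor_preserves_injective_linearMap _ hΥ
    simpa [map_sum] using hA
  have hcoeff := v.sub_eq_zero_of_sum_wedge_tmul_eq_zero _ hwedge k l
  have htwo : (2 : ℂ) • (A k * A l - A l * A k) = 0 := by
    rw [← hcoeff, two_smul]
    abel
  exact sub_eq_zero.mp ((smul_eq_zero.mp htwo).resolve_left two_ne_zero)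

/-- If the skew-symmetric Yoneda pairing `Υ` is injective, then every
solution of `μ(α) = 0` in `V ⊗ 𝔤𝔩ₙ` consists of pairwise commuting matrices, i.e. the
quadratic cone `μ⁻¹(0)` coincides with the commuting scheme. -/
theorem stmt14 {V E : Type*} [AddCommGroup V] [Module ℂ V] [FiniteDimensional ℂ V]
    [AddCommGroup E] [Module ℂ E] [FiniteDimensional ℂ E]
    (d : ℕ) (v : Module.Basis (Fin d) ℂ V)
    (Υ : (⋀[ℂ]^2 V) →ₗ[ℂ] E) (hΥ : Function.Injective Υ)
    (n : ℕ) (hn : 1 ≤ n)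
    (A : Fin d → Matrix (Fin n) (Fin n) ℂ)
    (hA : (∑ i : Fin d, ∑ j : Fin d,
        (Υ (wedge (v i) (v j))) ⊗ₜ[ℂ] (A i * A j - A j * A i))
      = (0 : E ⊗[ℂ] Matrix (Fin n) (Fin n) ℂ)) :
    ∀ i j : Fin d, A i * A j = A j * A i :=
  stmt14_general d v Υ hΥ n A hA
end
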